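/- arXiv:2603.15229 — 6 statements merged into one kernel-verified Lean document; each statement's English description precedes it below -/
import Mathlib

section
/- Let Δ be a simplicial tree and let M and N be two distinct k-matchings of Δ. Set M̂ = M \ N and N̂ = N \ M (so M̂ and N̂ have the same cardinality). Then the bipartite graph B_(M,N) on vertex set M̂ ⊔ N̂, whose edges are exactly the pairs {F, G} with F ∈ M̂, G ∈ N̂ and F ∩ G ≠ ∅, contains no cycle. -/
open scoped Classical
open Finset

variable {V : Type*}

/-- `F` is a leaf of the collection of facets `Γ`. -/
def IsLeafIn (Γ : Finset (Finset V)) (F : Finset V) : Prop :=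
  F ∈ Γ ∧ (Γ = {F} ∨ ∃ G ∈ Γ, G ≠ F ∧ ∀ H ∈ Γ, H ≠ F → F ∩ H ⊆ F ∩ G)

/-- A simplicial tree, given by its finite set of facets: the facets are nonempty and
pairwise incomparable, every nonempty subcollection has a leaf, and the complex is
connected (any two facets are joined by a chain of facets in which consecutive facets
intersect). -/
def IsSimplicialTree (Δ : Finset (Finset V)) : Prop :=
  (∀ F ∈ Δ, F.Nonempty) ∧
  (∀ F ∈ Δ, ∀ G ∈ Δ, F ⊆ G → F = G) ∧
  (∀ Γ : Finset (Finset V), Γ ⊆ Δ → Γ.Nonempty → ∃ F, IsLeafIn Γ F) ∧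
  (∀ F ∈ Δ, ∀ G ∈ Δ,
    Relation.ReflTransGen (fun A B => A ∈ Δ ∧ B ∈ Δ ∧ (A ∩ B).Nonempty) F G)

/-- A `k`-matching of `Δ`: a set of `k` pairwise disjoint facets of `Δ`. -/
def IsDeltaMatching (Δ : Finset (Finset V)) (k : ℕ) (M : Finset (Finset V)) : Prop :=
  M ⊆ Δ ∧ M.card = k ∧ ∀ F ∈ M, ∀ G ∈ M, F ≠ G → Disjoint F G

/-! The facets on a cycle of `B_(M,N)` form a subcollection of `Δ`, so one of them, `F`, is a
leaf with some witness `G`. On the cycle `F` has two distinct neighbours `H₁`, `H₂`, both from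
the other matching and both meeting `F`, so `G ⊇ F ∩ Hᵢ` meets `F`, `H₁` and `H₂`. Then `G` is
in neither matching: in `F`'s it would be disjoint from `F`, in the other one it would equal both
`H₁` and `H₂`. -/

theorem SimpleGraph.Walk.IsCycle.exists_adj_adj_of_mem_support {α : Type*}
    {G : SimpleGraph α} {v u : α} {c : G.Walk v v} (hc : c.IsCycle) (hu : u ∈ c.support) :
    ∃ x ∈ c.support, ∃ y ∈ c.support, x ≠ y ∧ G.Adj u x ∧ G.Adj u y := by
  have hc' : (c.rotate u hu).IsCycle := hc.rotate hu
  exact ⟨_, (c.mem_support_rotate_iff u hu).1 (getVert_mem_support _ _),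
    _, (c.mem_support_rotate_iff u hu).1 (getVert_mem_support _ _),
    hc'.snd_ne_penultimate, adj_snd hc'.not_nil, (adj_penultimate hc'.not_nil).symm⟩

theorem not_isLeafIn_of_meets_two {A B Γ : Finset (Finset V)}
    (hA : (A : Set (Finset V)).Pairwise Disjoint) (hB : (B : Set (Finset V)).Pairwise Disjoint)
    (hΓ : ∀ G ∈ Γ, G ∈ A ∨ G ∈ B) {F H₁ H₂ : Finset V} (hFA : F ∈ A) (hFB : F ∉ B)
    (hH₁ : H₁ ∈ Γ ∩ B) (hH₂ : H₂ ∈ Γ ∩ B) (hne : H₁ ≠ H₂)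
    (hF₁ : (F ∩ H₁).Nonempty) (hF₂ : (F ∩ H₂).Nonempty) : ¬IsLeafIn Γ F := by
  rw [mem_inter] at hH₁ hH₂
  have hH₁F : H₁ ≠ F := fun h => hFB (h ▸ hH₁.2)
  have hH₂F : H₂ ≠ F := fun h => hFB (h ▸ hH₂.2)
  rintro ⟨-, hsingle | ⟨G, hG, hGF, hsub⟩⟩
  · exact hH₁F (mem_singleton.1 (hsingle ▸ hH₁.1))
  obtain ⟨x, hx⟩ := hF₁
  obtain ⟨y, hy⟩ := hF₂
  have hxG := (mem_inter.1 (hsub H₁ hH₁.1 hH₁F hx)).2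
  have hyG := (mem_inter.1 (hsub H₂ hH₂.1 hH₂F hy)).2
  rcases hΓ G hG with hGA | hGB
  · exact disjoint_left.1 (hA hFA hGA hGF.symm) (mem_inter.1 hx).1 hxG
  · have eq_of_mem {H : Finset V} (hH : H ∈ B) {z : V} (hzH : z ∈ H) (hzG : z ∈ G) : G = H :=
      by_contra fun h => disjoint_left.1 (hB hGB hH h) hzG hzH
    exact hne ((eq_of_mem hH₁.2 (mem_inter.1 hx).2 hxG).symm.trans
      (eq_of_mem hH₂.2 (mem_inter.1 hy).2 hyG))

section BipartiteIntersectionGraph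

variable {M N : Finset (Finset V)}

/-- `B_(M,N)`, as a graph on all of `Finset V`: sets outside `M \ N ∪ N \ M` are isolated. -/
def bipartiteIntersectionGraph (M N : Finset (Finset V)) : SimpleGraph (Finset V) :=
  SimpleGraph.fromRel fun F G => F ∈ M \ N ∧ G ∈ N \ M ∧ (F ∩ G).Nonempty

theorem bipartiteIntersectionGraph_comm (M N : Finset (Finset V)) :
    bipartiteIntersectionGraph M N = bipartiteIntersectionGraph N M := by
  ext F G
  simp only [bipartiteIntersectionGraph, SimpleGraph.fromRel_adj, inter_comm F G]
  tauto

theorem bipartiteIntersectionGraph.mem_sdiff_of_adj {F H : Finset V}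
    (h : (bipartiteIntersectionGraph M N).Adj F H) (hF : F ∈ M \ N) :
    H ∈ N \ M ∧ (F ∩ H).Nonempty := by
  rw [bipartiteIntersectionGraph, SimpleGraph.fromRel_adj] at h
  rcases h.2 with ⟨-, hH, hFH⟩ | ⟨-, hF', -⟩
  · exact ⟨hH, hFH⟩
  · exact absurd (mem_sdiff.1 hF).1 (mem_sdiff.1 hF').2

theorem bipartiteIntersectionGraph.mem_sdiff_or_mem_sdiff_of_adj {F H : Finset V}
    (h : (bipartiteIntersectionGraph M N).Adj F H) : F ∈ M \ N ∨ F ∈ N \ M := by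
  rw [bipartiteIntersectionGraph, SimpleGraph.fromRel_adj] at h
  exact h.2.imp (·.1) (·.2.1)

theorem bipartiteIntersectionGraph.mem_sdiff_or_mem_sdiff_of_mem_support {v u : Finset V}
    {c : (bipartiteIntersectionGraph M N).Walk v v} (hc : c.IsCycle) (hu : u ∈ c.support) :
    u ∈ M \ N ∨ u ∈ N \ M := by
  obtain ⟨w, -, -, -, -, huw, -⟩ := hc.exists_adj_adj_of_mem_support hu
  exact mem_sdiff_or_mem_sdiff_of_adj huw

theorem bipartiteIntersectionGraph.not_isLeafIn_support_of_isCycle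
    (hM : (M : Set (Finset V)).Pairwise Disjoint) (hN : (N : Set (Finset V)).Pairwise Disjoint)
    {v : Finset V} {c : (bipartiteIntersectionGraph M N).Walk v v} (hc : c.IsCycle)
    {F : Finset V} (hF : F ∈ c.support) (hFM : F ∈ M \ N) :
    ¬IsLeafIn c.support.toFinset F := by
  have hside (u : Finset V) (hu : u ∈ c.support.toFinset) : u ∈ M ∨ u ∈ N :=
    (mem_sdiff_or_mem_sdiff_of_mem_support hc (List.mem_toFinset.1 hu)).imp
      (mem_sdiff.1 · |>.1) (mem_sdiff.1 · |>.1)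
  obtain ⟨H₁, h₁, H₂, h₂, hne, hF₁, hF₂⟩ := hc.exists_adj_adj_of_mem_support hF
  obtain ⟨hH₁, hFH₁⟩ := mem_sdiff_of_adj hF₁ hFM
  obtain ⟨hH₂, hFH₂⟩ := mem_sdiff_of_adj hF₂ hFM
  exact not_isLeafIn_of_meets_two hM hN hside (mem_sdiff.1 hFM).1 (mem_sdiff.1 hFM).2
    (mem_inter.2 ⟨List.mem_toFinset.2 h₁, (mem_sdiff.1 hH₁).1⟩)
    (mem_inter.2 ⟨List.mem_toFinset.2 h₂, (mem_sdiff.1 hH₂).1⟩) hne hFH₁ hFH₂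

end BipartiteIntersectionGraph

theorem bipartite_graph_of_two_matchings_acyclic_general
    (Δ : Finset (Finset V)) (hΔ : IsSimplicialTree Δ) (k : ℕ)
    (M N : Finset (Finset V))
    (hM : IsDeltaMatching Δ k M) (hN : IsDeltaMatching Δ k N) :
    (SimpleGraph.fromRel (fun F G : Finset V =>
      F ∈ M \ N ∧ G ∈ N \ M ∧ (F ∩ G).Nonempty)).IsAcyclic := by
  change (bipartiteIntersectionGraph M N).IsAcyclic
  intro v c hc
  have hside (u : Finset V) (hu : u ∈ c.support) : u ∈ M \ N ∨ u ∈ N \ M :=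
    bipartiteIntersectionGraph.mem_sdiff_or_mem_sdiff_of_mem_support hc hu
  have hΓ : c.support.toFinset ⊆ Δ := fun u hu =>
    (hside u (List.mem_toFinset.1 hu)).elim (fun h => hM.1 (mem_sdiff.1 h).1)
      (fun h => hN.1 (mem_sdiff.1 h).1)
  obtain ⟨F, hleaf⟩ := hΔ.2.2.1 _ hΓ ⟨v, List.mem_toFinset.2 c.start_mem_support⟩
  have hF : F ∈ c.support := List.mem_toFinset.1 hleaf.1
  rcases hside F hF with hFM | hFN
  · exact bipartiteIntersectionGraph.not_isLeafIn_support_of_isCycle hM.2.2 hN.2.2 hc hF hFM hleaf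
  · have hle := (bipartiteIntersectionGraph_comm M N).le
    refine bipartiteIntersectionGraph.not_isLeafIn_support_of_isCycle hN.2.2 hM.2.2
      (hc.mapLe hle) ?_ hFN ?_
    all_goals rwa [SimpleGraph.Walk.support_mapLe_eq_support]

/-- Lemma 3.3: for two distinct `k`-matchings `M`, `N` of a simplicial tree `Δ`, the
bipartite graph on `M̂ = M \ N` and `N̂ = N \ M` whose edges are the pairs `{F, G}` with
`F ∈ M̂`, `G ∈ N̂` and `F ∩ G ≠ ∅` is acyclic. -/
theorem bipartite_graph_of_two_matchings_acyclic
    (Δ : Finset (Finset V)) (hΔ : IsSimplicialTree Δ) (k : ℕ)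
    (M N : Finset (Finset V))
    (hM : IsDeltaMatching Δ k M) (hN : IsDeltaMatching Δ k N) (hMN : M ≠ N) :
    (SimpleGraph.fromRel (fun F G : Finset V =>
      F ∈ M \ N ∧ G ∈ N \ M ∧ (F ∩ G).Nonempty)).IsAcyclic :=
  bipartite_graph_of_two_matchings_acyclic_general Δ hΔ k M N hM hN
end

section
/- Let Δ be a simplicial tree and let M and N be two k-matchings of Δ such that V_M ⊆ V_N. Then M = N. -/
open scoped Classical
open Finset

variable {V : Type*}

/-- Key lemma: if `M` and `N` are matchings with `|N| ≤ |M|` and `V_M ⊆ V_N`,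
then `M = N`.  Proved by strong induction on `|N|`. -/
lemma matchings_key (Δ : Finset (Finset V)) (hΔ : IsSimplicialTree Δ) :
    ∀ n : ℕ, ∀ M N : Finset (Finset V), M ⊆ Δ → N ⊆ Δ →
      (∀ F ∈ M, ∀ G ∈ M, F ≠ G → Disjoint F G) →
      (∀ F ∈ N, ∀ G ∈ N, F ≠ G → Disjoint F G) →
      N.card = n → n ≤ M.card → M.biUnion id ⊆ N.biUnion id → M = N := by
  obtain ⟨hne, hinc, hleaf, -⟩ := hΔ
  intro n
  induction n using Nat.strong_induction_on with
  | _ n IH =>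
  intro M N hMΔ hNΔ hMd hNd hNcard hle hsub
  have hmem : ∀ v : V, ∀ F' ∈ M, v ∈ F' → ∃ G ∈ N, v ∈ G := by
    intro v F' hF' hv
    have := hsub (mem_biUnion.mpr ⟨F', hF', hv⟩)
    simpa using this
  rcases Nat.eq_zero_or_pos n with h0 | hpos
  · subst h0
    have hN : N = ∅ := Finset.card_eq_zero.mp hNcard
    subst hN
    rw [Finset.eq_empty_iff_forall_notMem]
    intro F hF
    obtain ⟨v, hv⟩ := hne F (hMΔ hF)
    obtain ⟨G, hG, -⟩ := hmem v F hF hv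
    exact absurd hG (Finset.notMem_empty G)
  · have hNne : N.Nonempty := Finset.card_pos.mp (hNcard ▸ hpos)
    set Γ : Finset (Finset V) := M ∪ N with hΓdef
    have hΓΔ : Γ ⊆ Δ := Finset.union_subset hMΔ hNΔ
    have hΓne : Γ.Nonempty := hNne.mono Finset.subset_union_right
    obtain ⟨F, hFΓ, hc⟩ := hleaf Γ hΓΔ hΓne
    rcases hc with hsing | ⟨G₀, hG₀Γ, hG₀ne, hdom⟩
    · -- Γ = {F} : then M = {F} = N
      have hMs : M ⊆ {F} := hsing ▸ Finset.subset_union_left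
      have hNs : N ⊆ {F} := hsing ▸ Finset.subset_union_right
      have hMne : M.Nonempty := Finset.card_pos.mp (lt_of_lt_of_le hpos hle)
      have hMF : M = {F} := by
        rcases Finset.subset_singleton_iff.mp hMs with h | h
        · exact absurd h hMne.ne_empty
        · exact h
      have hNF : N = {F} := by
        rcases Finset.subset_singleton_iff.mp hNs with h | h
        · exact absurd h hNne.ne_empty
        · exact h
      rw [hMF, hNF]
    · by_cases hFM : F ∈ M
      · by_cases hFN : F ∈ N
        · -- remove F from both sides, apply the induction hypothesis
          have hsub' : (M.erase F).biUnion id ⊆ (N.erase F).biUnion id := by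
            intro v hv
            obtain ⟨F', hF', hvF'⟩ := mem_biUnion.mp hv
            obtain ⟨hF'ne, hF'M⟩ := Finset.mem_erase.mp hF'
            obtain ⟨G, hG, hvG⟩ := hmem v F' hF'M hvF'
            have hGF : G ≠ F := by
              rintro rfl
              exact Finset.disjoint_left.mp (hMd F' hF'M G hFM hF'ne) hvF' hvG
            exact mem_biUnion.mpr ⟨G, Finset.mem_erase.mpr ⟨hGF, hG⟩, hvG⟩
          have heq := IH (n - 1) (Nat.sub_lt hpos one_pos) (M.erase F) (N.erase F)
            ((Finset.erase_subset _ _).trans hMΔ) ((Finset.erase_subset _ _).trans hNΔ)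
            (fun a ha b hb hab =>
              hMd a (Finset.mem_of_mem_erase ha) b (Finset.mem_of_mem_erase hb) hab)
            (fun a ha b hb hab =>
              hNd a (Finset.mem_of_mem_erase ha) b (Finset.mem_of_mem_erase hb) hab)
            (by rw [Finset.card_erase_of_mem hFN, hNcard])
            (by rw [Finset.card_erase_of_mem hFM]; exact Nat.sub_le_sub_right hle 1)
            hsub'
          calc M = insert F (M.erase F) := (Finset.insert_erase hFM).symm
            _ = insert F (N.erase F) := by rw [heq]
            _ = N := Finset.insert_erase hFN
        · -- F ∈ M \ N : then F ⊆ G₀, contradicting incomparability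
          have hFG₀ : F ⊆ G₀ := by
            intro v hv
            obtain ⟨G, hG, hvG⟩ := hmem v F hFM hv
            have hGF : G ≠ F := fun h => hFN (h ▸ hG)
            have := hdom G (Finset.mem_union_right _ hG) hGF
              (Finset.mem_inter.mpr ⟨hv, hvG⟩)
            exact (Finset.mem_inter.mp this).2
          exact absurd (hinc F (hMΔ hFM) G₀ (hΓΔ hG₀Γ) hFG₀).symm hG₀ne
      · -- F ∉ M, so F ∈ N
        have hFN : F ∈ N := (Finset.mem_union.mp hFΓ).resolve_left hFM
        have hdisjG₀ : ∀ F' ∈ M, F ∩ F' ⊆ F ∩ G₀ := fun F' hF' =>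
          hdom F' (Finset.mem_union_left _ hF') (fun h => hFM (h ▸ hF'))
        by_cases hG₀N : G₀ ∈ N
        · -- F is disjoint from all of M; remove F from N, contradiction on cards
          have hFdisj : ∀ F' ∈ M, Disjoint F F' := by
            intro F' hF'
            rw [Finset.disjoint_left]
            intro v hvF hvF'
            have hvG₀ := (Finset.mem_inter.mp
              (hdisjG₀ F' hF' (Finset.mem_inter.mpr ⟨hvF, hvF'⟩))).2
            exact Finset.disjoint_left.mp (hNd F hFN G₀ hG₀N (Ne.symm hG₀ne)) hvF hvG₀
          have hsub' : M.biUnion id ⊆ (N.erase F).biUnion id := by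
            intro v hv
            obtain ⟨F', hF', hvF'⟩ := mem_biUnion.mp hv
            obtain ⟨G, hG, hvG⟩ := hmem v F' hF' hvF'
            have hGF : G ≠ F := by
              rintro rfl
              exact Finset.disjoint_left.mp (hFdisj F' hF') hvG hvF'
            exact mem_biUnion.mpr ⟨G, Finset.mem_erase.mpr ⟨hGF, hG⟩, hvG⟩
          have heq := IH (n - 1) (Nat.sub_lt hpos one_pos) M (N.erase F)
            hMΔ ((Finset.erase_subset _ _).trans hNΔ)
            hMd
            (fun a ha b hb hab =>
              hNd a (Finset.mem_of_mem_erase ha) b (Finset.mem_of_mem_erase hb) hab)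
            (by rw [Finset.card_erase_of_mem hFN, hNcard])
            (le_trans (Nat.sub_le n 1) hle)
            hsub'
          have hcard : M.card = n - 1 := by
            rw [heq, Finset.card_erase_of_mem hFN, hNcard]
          exact absurd hle (by omega)
        · -- G₀ ∈ M \ N : remove G₀ from M and F from N
          have hG₀M : G₀ ∈ M := (Finset.mem_union.mp hG₀Γ).resolve_right hG₀N
          have hFdisj : ∀ F' ∈ M, F' ≠ G₀ → Disjoint F F' := by
            intro F' hF' hne'
            rw [Finset.disjoint_left]
            intro v hvF hvF'
            have hvG₀ := (Finset.mem_inter.mp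
              (hdisjG₀ F' hF' (Finset.mem_inter.mpr ⟨hvF, hvF'⟩))).2
            exact Finset.disjoint_left.mp (hMd F' hF' G₀ hG₀M hne') hvF' hvG₀
          have hsub' : (M.erase G₀).biUnion id ⊆ (N.erase F).biUnion id := by
            intro v hv
            obtain ⟨F', hF', hvF'⟩ := mem_biUnion.mp hv
            obtain ⟨hne', hF'M⟩ := Finset.mem_erase.mp hF'
            obtain ⟨G, hG, hvG⟩ := hmem v F' hF'M hvF'
            have hGF : G ≠ F := by
              rintro rfl
              exact Finset.disjoint_left.mp (hFdisj F' hF'M hne') hvG hvF'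
            exact mem_biUnion.mpr ⟨G, Finset.mem_erase.mpr ⟨hGF, hG⟩, hvG⟩
          have heq := IH (n - 1) (Nat.sub_lt hpos one_pos) (M.erase G₀) (N.erase F)
            ((Finset.erase_subset _ _).trans hMΔ) ((Finset.erase_subset _ _).trans hNΔ)
            (fun a ha b hb hab =>
              hMd a (Finset.mem_of_mem_erase ha) b (Finset.mem_of_mem_erase hb) hab)
            (fun a ha b hb hab =>
              hNd a (Finset.mem_of_mem_erase ha) b (Finset.mem_of_mem_erase hb) hab)
            (by rw [Finset.card_erase_of_mem hFN, hNcard])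
            (by rw [Finset.card_erase_of_mem hG₀M]; exact Nat.sub_le_sub_right hle 1)
            hsub'
          -- Now G₀ ⊆ F, contradicting incomparability
          have hG₀F : G₀ ⊆ F := by
            intro v hv
            obtain ⟨G, hG, hvG⟩ := hmem v G₀ hG₀M hv
            by_contra hvF
            have hGF : G ≠ F := fun h => hvF (h ▸ hvG)
            have hGM : G ∈ M.erase G₀ := by
              rw [heq]; exact Finset.mem_erase.mpr ⟨hGF, hG⟩
            obtain ⟨hGG₀, hGM'⟩ := Finset.mem_erase.mp hGM
            exact Finset.disjoint_left.mp
              (hMd G₀ hG₀M G hGM' (Ne.symm hGG₀)) hv hvG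
          have : G₀ = F := hinc G₀ (hΓΔ hG₀Γ) F (hNΔ hFN) hG₀F
          exact absurd (this ▸ hG₀M) hFM

/-- Proposition 3.4: if `M` and `N` are `k`-matchings of a simplicial tree with
`V_M ⊆ V_N`, then `M = N`. -/
theorem matchings_eq_of_vertexSet_subset
    (Δ : Finset (Finset V)) (hΔ : IsSimplicialTree Δ) (k : ℕ)
    (M N : Finset (Finset V))
    (hM : IsDeltaMatching Δ k M) (hN : IsDeltaMatching Δ k N)
    (hVsub : M.biUnion id ⊆ N.biUnion id) :
    M = N := by
  obtain ⟨hMΔ, hMk, hMd⟩ := hM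
  obtain ⟨hNΔ, hNk, hNd⟩ := hN
  exact matchings_key Δ hΔ k M N hMΔ hNΔ hMd hNd hNk (by rw [hMk]) hVsub
end

section
/- Let T be a tree (finite connected acyclic simple graph) and k ≥ 1. Then every minimal monomial generator u of the ideal NI(T)^{[k]} can be written as u = ∏_{F ∈ M} ∏_{v ∈ F} x_v for some k-matching M of 𝒩(T), and this k-matching M is uniquely determined by u. -/
/-!
A minimal generator of `NI(T)^{[k]}` is a squarefree monomial `x_D` lying in `NI(T)^k`, so a
product of `k` facets divides it. Since `x_D` is squarefree these facets are pairwise disjoint,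
hence form a `k`-matching, and by minimality their product is `x_D` itself.

For uniqueness, two `k`-matchings `M, M'` of `𝒩(T)` covering the same vertices are equal: root `T`
at any vertex and let `N[u]` be a facet of `M ∪ M'` whose centre is farthest from the root, say
`N[u] ∈ M`. If `N[u] ∉ M'`, then `u` is covered by the facet `N[v] ∈ M'` of its parent `v`, while a
child of `u` could only be covered by the facet of its own parent `u`; so `u` is a leaf and
`N[u] ⊆ N[v]`, which contradicts `N[v]` being a facet. Thus `N[u] ∈ M ∩ M'`; remove it and induct.
-/

open scoped Classical
open SimpleGraph Finset MvPolynomial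

variable {V : Type*}

/-- The closed neighborhood `N_G[u]` of a vertex, as a finite set. -/
noncomputable def closedNbhd [Fintype V] (G : SimpleGraph V) (u : V) : Finset V :=
  insert u (G.neighborFinset u)

/-- `F` is a facet of the closed neighborhood complex `𝒩(G)`:
`F = N_G[u]` for some vertex `u`, and no closed neighborhood of another vertex is
contained in `N_G[u]`. -/
def IsNFacet [Fintype V] (G : SimpleGraph V) (F : Finset V) : Prop :=
  ∃ u : V, F = closedNbhd G u ∧
    ∀ v : V, v ≠ u → ¬ closedNbhd G v ⊆ closedNbhd G u

/-- A `k`-matching of `𝒩(G)`: a set of `k` pairwise disjoint facets of `𝒩(G)`. -/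
def IsNMatching [Fintype V] (G : SimpleGraph V) (k : ℕ) (M : Finset (Finset V)) : Prop :=
  M.card = k ∧ (∀ F ∈ M, IsNFacet G F) ∧
    ∀ F ∈ M, ∀ F' ∈ M, F ≠ F' → Disjoint F F'

/-- The closed neighborhood ideal `NI(G)`, generated by the squarefree monomials
`∏_{v ∈ F} x_v` over the facets `F` of `𝒩(G)`. -/
noncomputable def NIdeal [Fintype V] (K : Type*) [Field K] (G : SimpleGraph V) :
    Ideal (MvPolynomial V K) :=
  Ideal.span {p | ∃ F : Finset V, IsNFacet G F ∧ p = ∏ v ∈ F, X v}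

/-- The `k`-th squarefree power `I^{[k]}` of an ideal: the ideal generated by all
squarefree monomials contained in `I ^ k`. -/
noncomputable def sqfreePow {K : Type*} [Field K] (I : Ideal (MvPolynomial V K)) (k : ℕ) :
    Ideal (MvPolynomial V K) :=
  Ideal.span {p | (∃ F : Finset V, p = ∏ v ∈ F, X v) ∧ p ∈ I ^ k}

/-- `p` is a minimal monomial generator of the monomial ideal `I`:
`p` is a monic monomial belonging to `I` but not to `𝔪 · I`, where `𝔪` is the ideal
generated by all the variables. -/
def IsMinMonGen {K : Type*} [Field K] (I : Ideal (MvPolynomial V K))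
    (p : MvPolynomial V K) : Prop :=
  (∃ d : V →₀ ℕ, p = monomial d 1) ∧ p ∈ I ∧
    p ∉ Ideal.span (Set.range (X : V → MvPolynomial V K)) * I

lemma Finset.biUnion_erase_of_pairwiseDisjoint {α : Type*} [DecidableEq α] {M : Finset (Finset α)}
    (hM : (M : Set (Finset α)).PairwiseDisjoint id) {F : Finset α} (hF : F ∈ M) :
    (M.erase F).biUnion id = M.biUnion id \ F := by
  ext x
  simp only [mem_biUnion, mem_erase, mem_sdiff, id]
  constructor
  · rintro ⟨F', ⟨hF'F, hF'⟩, hx⟩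
    exact ⟨⟨F', hF', hx⟩, disjoint_left.1 (hM hF' hF hF'F) hx⟩
  · rintro ⟨⟨F', hF', hx⟩, hxF⟩
    exact ⟨F', ⟨by rintro rfl; exact hxF hx, hF'⟩, hx⟩

namespace SimpleGraph

variable {G : SimpleGraph V}

lemma IsTree.eq_of_dist_eq_dist_add_one (hT : G.IsTree) (r : V) {x y c : V}
    (hx : G.Adj x c) (hy : G.Adj y c) (hdx : G.dist r c = G.dist r x + 1)
    (hdy : G.dist r c = G.dist r y + 1) : x = y := by
  obtain ⟨p, hp, -⟩ := (hT.connected r c).exists_path_of_dist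
  suffices ∀ z, G.Adj z c → G.dist r c = G.dist r z + 1 → z = p.penultimate from
    (this x hx hdx).trans (this y hy hdy).symm
  intro z hz hdz
  obtain ⟨q, hq, hql⟩ := (hT.connected r z).exists_path_of_dist
  have hcq : c ∉ q.support := fun hc => by
    have := (G.dist_le (q.takeUntil c hc)).trans (q.length_takeUntil_le_length hc)
    omega
  exact hT.isAcyclic.eq_penultimate_of_adj_end hp hz.symm
    (hT.isAcyclic.mem_support_of_ne_mem_support_of_adj_of_isPath hp hq hz.symm hcq)

end SimpleGraph

section SquarefreeMonomials

variable {σ : Type*}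

noncomputable def sqfreeExp (F : Finset σ) : σ →₀ ℕ := ∑ v ∈ F, Finsupp.single v 1

lemma sqfreeExp_apply (F : Finset σ) (x : σ) : sqfreeExp F x = if x ∈ F then 1 else 0 := by
  simp [sqfreeExp, Finsupp.finsetSum_apply, Finsupp.single_apply]

lemma sqfreeExp_injective : Function.Injective (sqfreeExp : Finset σ → σ →₀ ℕ) := by
  intro F F' h
  ext x
  have := DFunLike.congr_fun h x
  simp only [sqfreeExp_apply] at this
  split_ifs at this <;> simp_all

lemma sqfreeExp_biUnion {ι : Type*} {s : Finset ι} {t : ι → Finset σ}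
    (h : (s : Set ι).PairwiseDisjoint t) : sqfreeExp (s.biUnion t) = ∑ i ∈ s, sqfreeExp (t i) :=
  sum_biUnion h

lemma pairwise_disjoint_of_sum_sqfreeExp_le {ι : Type*} [Fintype ι] {F : ι → Finset σ}
    {D : Finset σ} (h : ∑ i, sqfreeExp (F i) ≤ sqfreeExp D) :
    Pairwise fun i j => Disjoint (F i) (F j) := by
  intro i j hij
  refine disjoint_left.2 fun x hxi hxj => ?_
  have hsum : ∑ l ∈ {i, j}, sqfreeExp (F l) x ≤ ∑ l, sqfreeExp (F l) x :=
    sum_le_sum_of_subset (subset_univ _)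
  have hD : (∑ l, sqfreeExp (F l)) x ≤ sqfreeExp D x := h x
  rw [Finsupp.finsetSum_apply, sqfreeExp_apply] at hD
  rw [sum_pair hij, sqfreeExp_apply, sqfreeExp_apply, if_pos hxi, if_pos hxj] at hsum
  split_ifs at hD <;> omega

lemma prod_X_eq_monomial_sqfreeExp {R : Type*} [CommSemiring R] (F : Finset σ) :
    ∏ v ∈ F, (X v : MvPolynomial σ R) = monomial (sqfreeExp F) 1 :=
  (monomial_sum_one F _).symm

end SquarefreeMonomials

section MonomialIdeals

open scoped Pointwise

variable {σ R : Type*} [CommSemiring R]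

lemma exists_le_of_monomial_mem_span [Nontrivial R] {S : Set (MvPolynomial σ R)}
    (hS : ∀ q ∈ S, ∃ e, q = monomial e 1) {d : σ →₀ ℕ} (h : monomial d 1 ∈ Ideal.span S) :
    ∃ e ≤ d, monomial e 1 ∈ S := by
  have hS' : S = (monomial · 1) '' {e | monomial e 1 ∈ S} := by
    ext q
    constructor
    · intro hq
      obtain ⟨e, rfl⟩ := hS q hq
      exact ⟨e, hq, rfl⟩
    · rintro ⟨e, he, rfl⟩
      exact he
  rw [hS', mem_ideal_span_monomial_image] at h
  obtain ⟨e, he, hle⟩ := h d (by simp [support_monomial])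
  exact ⟨e, hle, he⟩

lemma exists_eq_monomial_sum_sqfreeExp_of_mem_pow {P : Finset σ → Prop} {k : ℕ}
    {q : MvPolynomial σ R} (hq : q ∈ {p | ∃ F, P F ∧ p = ∏ v ∈ F, X v} ^ k) :
    ∃ F : Fin k → Finset σ, (∀ i, P (F i)) ∧ q = monomial (∑ i, sqfreeExp (F i)) 1 := by
  obtain ⟨f, hf, rfl⟩ := Set.mem_pow_iff_prod.1 hq
  choose F hPF hfF using hf
  refine ⟨F, hPF, ?_⟩
  simp_rw [hfF, prod_X_eq_monomial_sqfreeExp, monomial_sum_one]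

lemma exists_sum_sqfreeExp_le_of_monomial_mem_span_pow [Nontrivial R] {P : Finset σ → Prop}
    {k : ℕ} {d : σ →₀ ℕ}
    (h : monomial d 1 ∈ Ideal.span {p : MvPolynomial σ R | ∃ F, P F ∧ p = ∏ v ∈ F, X v} ^ k) :
    ∃ F : Fin k → Finset σ, (∀ i, P (F i)) ∧ ∑ i, sqfreeExp (F i) ≤ d := by
  rw [Ideal.span, Submodule.span_pow] at h
  have hmon (q) (hq : q ∈ {p : MvPolynomial σ R | ∃ F, P F ∧ p = ∏ v ∈ F, X v} ^ k) :
      ∃ e, q = monomial e 1 := by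
    obtain ⟨F, -, rfl⟩ := exists_eq_monomial_sum_sqfreeExp_of_mem_pow hq
    exact ⟨_, rfl⟩
  obtain ⟨e, hle, he⟩ := exists_le_of_monomial_mem_span hmon h
  obtain ⟨F, hF, heF⟩ := exists_eq_monomial_sum_sqfreeExp_of_mem_pow he
  exact ⟨F, hF, monomial_left_injective one_ne_zero heF ▸ hle⟩

end MonomialIdeals

section MinimalGenerators

variable {K : Type*} [Field K]

lemma IsMinMonGen.eq_of_le {I : Ideal (MvPolynomial V K)} {d e : V →₀ ℕ}
    (hp : IsMinMonGen I (monomial d 1)) (hle : e ≤ d) (he : monomial e 1 ∈ I) : e = d := by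
  by_contra hne
  obtain ⟨x, hx⟩ : ∃ x, e x < d x := by
    by_contra! h
    exact hne (le_antisymm hle (Finsupp.le_def.2 h))
  have hxd : Finsupp.single x 1 ≤ d - e := by
    rw [Finsupp.single_le_iff, Finsupp.tsub_apply]
    omega
  have hd : monomial d (1 : K) =
      X x * (monomial (d - e - Finsupp.single x 1) 1 * monomial e 1) := by
    rw [X, monomial_mul, monomial_mul, one_mul, one_mul, ← add_assoc,
      add_tsub_cancel_of_le hxd, tsub_add_cancel_of_le hle]
  exact hp.2.2 (hd ▸ Ideal.mul_mem_mul (Ideal.subset_span ⟨x, rfl⟩) (I.mul_mem_left _ he))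

lemma IsMinMonGen.exists_sqfreeExp_of_sqfreePow {I : Ideal (MvPolynomial V K)} {k : ℕ}
    {d : V →₀ ℕ} (hp : IsMinMonGen (sqfreePow I k) (monomial d 1)) :
    ∃ D : Finset V, d = sqfreeExp D ∧ monomial d 1 ∈ I ^ k := by
  have hmon (q) (hq : q ∈ {p | (∃ F : Finset V, p = ∏ v ∈ F, X v) ∧ p ∈ I ^ k}) :
      ∃ e, q = monomial e 1 := by
    obtain ⟨⟨F, rfl⟩, -⟩ := hq
    exact ⟨_, prod_X_eq_monomial_sqfreeExp F⟩
  obtain ⟨e, hle, ⟨D, hD⟩, he⟩ := exists_le_of_monomial_mem_span hmon hp.2.1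
  obtain rfl := hp.eq_of_le hle (Ideal.subset_span ⟨⟨D, hD⟩, he⟩)
  exact ⟨D, monomial_left_injective one_ne_zero (hD.trans (prod_X_eq_monomial_sqfreeExp D)), he⟩

end MinimalGenerators

section ClosedNeighborhoodComplex

variable [Fintype V] {G : SimpleGraph V}

lemma mem_closedNbhd {u x : V} : x ∈ closedNbhd G u ↔ x = u ∨ G.Adj u x := by
  simp [closedNbhd]

lemma self_mem_closedNbhd (u : V) : u ∈ closedNbhd G u :=
  mem_closedNbhd.2 (Or.inl rfl)

lemma closedNbhd_mem_of_forall_dist_le (hT : G.IsTree) (r : V) {M : Finset (Finset V)}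
    (hM : ∀ F ∈ M, IsNFacet G F) {u : V} (hcov : closedNbhd G u ⊆ M.biUnion id)
    (hfar : ∀ w, closedNbhd G w ∈ M → G.dist r w ≤ G.dist r u) :
    closedNbhd G u ∈ M := by
  by_contra huM
  have cover : ∀ x ∈ closedNbhd G u, ∃ w, closedNbhd G w ∈ M ∧ x ∈ closedNbhd G w ∧ w ≠ u ∧
      ∀ y, y ≠ w → ¬ closedNbhd G y ⊆ closedNbhd G w := by
    intro x hx
    obtain ⟨F, hF, hxF⟩ := mem_biUnion.1 (hcov hx)
    obtain ⟨w, rfl, hw⟩ := hM F hF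
    exact ⟨w, hF, hxF, by rintro rfl; exact huM hF, hw⟩
  obtain ⟨v, hvM, huv, hvu, hv⟩ := cover u (self_mem_closedNbhd u)
  have hadj : G.Adj v u := (mem_closedNbhd.1 huv).resolve_left hvu.symm
  have hdu : G.dist r u = G.dist r v + 1 := by
    have := hfar v hvM
    rcases hT.dist_eq_dist_add_one_of_adj r hadj with h | h <;> omega
  have hnbr : ∀ c, G.Adj u c → c = v := by
    intro c hc
    rcases hT.dist_eq_dist_add_one_of_adj r hc with hcu | hcu
    · exact hT.eq_of_dist_eq_dist_add_one r hc.symm hadj hcu hdu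
    · obtain ⟨w, hwM, hcw, hwu, -⟩ := cover c (mem_closedNbhd.2 (Or.inr hc))
      have hdw := hfar w hwM
      have hwc : G.Adj w c := (mem_closedNbhd.1 hcw).resolve_left (by rintro rfl; omega)
      rcases hT.dist_eq_dist_add_one_of_adj r hwc with h | h
      · omega
      · exact absurd (hT.eq_of_dist_eq_dist_add_one r hwc hc h (by omega)) hwu
  refine hv u hvu.symm fun x hx => ?_
  rcases mem_closedNbhd.1 hx with rfl | hux
  · exact huv
  · rw [hnbr x hux]
    exact self_mem_closedNbhd v

lemma IsNMatching.pairwiseDisjoint {k : ℕ} {M : Finset (Finset V)} (hM : IsNMatching G k M) :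
    (M : Set (Finset V)).PairwiseDisjoint id :=
  fun F hF F' hF' hne => hM.2.2 F hF F' hF' hne

lemma IsNMatching.erase {k : ℕ} {M : Finset (Finset V)} (hM : IsNMatching G (k + 1) M)
    {F : Finset V} (hF : F ∈ M) : IsNMatching G k (M.erase F) :=
  ⟨by rw [card_erase_of_mem hF, hM.1, Nat.add_sub_cancel],
    fun F' hF' => hM.2.1 F' (mem_of_mem_erase hF'),
    fun F' hF' F'' hF'' => hM.2.2 F' (mem_of_mem_erase hF') F'' (mem_of_mem_erase hF'')⟩

lemma exists_mem_mem_of_biUnion_eq (hT : G.IsTree) {M M' : Finset (Finset V)}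
    (hM : ∀ F ∈ M, IsNFacet G F) (hM' : ∀ F ∈ M', IsNFacet G F) (hne : M.Nonempty)
    (h : M.biUnion id = M'.biUnion id) : ∃ F ∈ M, F ∈ M' := by
  obtain ⟨F, hF⟩ := hne
  obtain ⟨r, rfl, -⟩ := hM F hF
  obtain ⟨u, hu, hmax⟩ := exists_max_image
    (univ.filter fun w => closedNbhd G w ∈ M ∪ M') (G.dist r) ⟨r, by simp [hF]⟩
  have hfar : ∀ w, closedNbhd G w ∈ M ∪ M' → G.dist r w ≤ G.dist r u :=
    fun w hw => hmax w (mem_filter.2 ⟨mem_univ w, hw⟩)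
  rcases mem_union.1 (mem_filter.1 hu).2 with huM | huM'
  · refine ⟨_, huM, closedNbhd_mem_of_forall_dist_le hT r hM' ?_ fun w hw => hfar w (by simp [hw])⟩
    exact h ▸ subset_biUnion_of_mem id huM
  · refine ⟨_, closedNbhd_mem_of_forall_dist_le hT r hM ?_ fun w hw => hfar w (by simp [hw]), huM'⟩
    exact h.symm ▸ subset_biUnion_of_mem id huM'

theorem IsNMatching.eq_of_biUnion_eq (hT : G.IsTree) {k : ℕ} {M M' : Finset (Finset V)}
    (hM : IsNMatching G k M) (hM' : IsNMatching G k M') (h : M.biUnion id = M'.biUnion id) :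
    M = M' := by
  induction k generalizing M M' with
  | zero => rw [card_eq_zero.1 hM.1, card_eq_zero.1 hM'.1]
  | succ k ih =>
    obtain ⟨F, hFM, hFM'⟩ := exists_mem_mem_of_biUnion_eq hT hM.2.1 hM'.2.1
      (card_pos.1 (hM.1 ▸ k.succ_pos)) h
    have hrest : M.erase F = M'.erase F := ih (hM.erase hFM) (hM'.erase hFM') (by
      rw [biUnion_erase_of_pairwiseDisjoint hM.pairwiseDisjoint hFM,
        biUnion_erase_of_pairwiseDisjoint hM'.pairwiseDisjoint hFM', h])
    rw [← insert_erase hFM, ← insert_erase hFM', hrest]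

lemma isNMatching_image_univ {k : ℕ} {F : Fin k → Finset V} (hF : ∀ i, IsNFacet G (F i))
    (hdisj : Pairwise fun i j => Disjoint (F i) (F j)) :
    IsNMatching G k (univ.image F) := by
  have hinj : Function.Injective F := by
    intro i j hij
    by_contra hne
    obtain ⟨u, hu, -⟩ := hF i
    have hui : u ∈ F i := hu ▸ self_mem_closedNbhd u
    exact disjoint_left.1 (hdisj hne) hui (hij ▸ hui)
  refine ⟨by rw [card_image_of_injective _ hinj, card_fin], forall_mem_image.2 fun i _ => hF i,
    forall_mem_image.2 fun i _ => forall_mem_image.2 fun j _ hij => hdisj (ne_of_apply_ne F hij)⟩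

variable {K : Type*} [Field K]

lemma IsNMatching.prod_prod_X_eq {k : ℕ} {M : Finset (Finset V)} (hM : IsNMatching G k M) :
    ∏ F ∈ M, ∏ v ∈ F, (X v : MvPolynomial V K) = monomial (sqfreeExp (M.biUnion id)) 1 := by
  rw [← prod_X_eq_monomial_sqfreeExp, prod_biUnion hM.pairwiseDisjoint]
  rfl

lemma IsNMatching.prod_prod_X_mem_sqfreePow {k : ℕ} {M : Finset (Finset V)}
    (hM : IsNMatching G k M) :
    ∏ F ∈ M, ∏ v ∈ F, (X v : MvPolynomial V K) ∈ sqfreePow (NIdeal K G) k := by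
  refine Ideal.subset_span ⟨⟨M.biUnion id, (prod_biUnion hM.pairwiseDisjoint).symm⟩, ?_⟩
  rw [← hM.1, ← prod_const]
  exact Ideal.prod_mem_prod fun F hF => Ideal.subset_span ⟨F, hM.2.1 F hF, rfl⟩

end ClosedNeighborhoodComplex

theorem minMonGen_sqfreePow_eq_unique_matching_general
    [Fintype V] (K : Type*) [Field K] (G : SimpleGraph V) (hT : G.IsTree)
    (k : ℕ) (p : MvPolynomial V K)
    (hp : IsMinMonGen (sqfreePow (NIdeal K G) k) p) :
    ∃! M : Finset (Finset V), IsNMatching G k M ∧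
      p = ∏ F ∈ M, ∏ v ∈ F, (X v : MvPolynomial V K) := by
  obtain ⟨d, rfl⟩ := hp.1
  obtain ⟨D, rfl, hD⟩ := hp.exists_sqfreeExp_of_sqfreePow
  obtain ⟨F, hF, hle⟩ := exists_sum_sqfreeExp_le_of_monomial_mem_span_pow hD
  have hdisj := pairwise_disjoint_of_sum_sqfreeExp_le hle
  have hM := isNMatching_image_univ hF hdisj
  have hcover : sqfreeExp ((univ.image F).biUnion id) = sqfreeExp D := by
    refine hp.eq_of_le ?_ (hM.prod_prod_X_eq (K := K) ▸ hM.prod_prod_X_mem_sqfreePow)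
    simp only [image_biUnion, id_eq]
    rwa [sqfreeExp_biUnion fun i _ j _ hij => hdisj hij]
  refine ⟨_, ⟨hM, by rw [hM.prod_prod_X_eq, hcover]⟩, fun M ⟨hM', hpM⟩ => ?_⟩
  refine hM'.eq_of_biUnion_eq hT hM (sqfreeExp_injective ?_)
  rw [hcover]
  exact (monomial_left_injective one_ne_zero (hpM.trans hM'.prod_prod_X_eq)).symm

/-- Corollary 3.5: every minimal monomial generator of `NI(T)^{[k]}`, for `T` a tree, is
`∏_{F ∈ M} ∏_{v ∈ F} x_v` for a unique `k`-matching `M` of `𝒩(T)`. -/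
theorem minMonGen_sqfreePow_eq_unique_matching
    [Fintype V] (K : Type*) [Field K] (G : SimpleGraph V) (hT : G.IsTree)
    (k : ℕ) (hk : 1 ≤ k) (p : MvPolynomial V K)
    (hp : IsMinMonGen (sqfreePow (NIdeal K G) k) p) :
    ∃! M : Finset (Finset V), IsNMatching G k M ∧
      p = ∏ F ∈ M, ∏ v ∈ F, (X v : MvPolynomial V K) :=
  minMonGen_sqfreePow_eq_unique_matching_general K G hT k p hp
end

section
/- Let T be a tree, let u be a vertex of T, and let T_1, …, T_d be the connected components of the induced subgraph of T on V(T) \ {u}. Let ν be the matching number of 𝒩(T) and let M and N be two ν-matchings of 𝒩(T). Then for each i = 1, …, d one has |M_{T_i}| − 1 ≤ |N_{T_i}| ≤ |M_{T_i}| + 1, where M_{T_i} = {F ∈ M : F ⊆ V(T_i)} and N_{T_i} = {F ∈ N : F ⊆ V(T_i)}. -/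
open scoped Classical
open SimpleGraph Finset MvPolynomial

variable {V : Type*}

/-- The vertex set (inside `V`) of the connected component `c` of the induced subgraph
of `G` on `V \ {u}`. -/
def compVerts [Fintype V] (G : SimpleGraph V) (u : V)
    (c : (SimpleGraph.induce {v : V | v ≠ u} G).ConnectedComponent) : Set V :=
  {v : V | ∃ h : v ≠ u, (SimpleGraph.induce {v : V | v ≠ u} G).connectedComponentMk ⟨v, h⟩ = c}

/-- For a matching `M` and a set `W` of vertices, the subcollection
`M_W = {F ∈ M : F ⊆ W}`. -/
noncomputable def matchPart (M : Finset (Finset V)) (W : Set V) : Finset (Finset V) :=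
  M.filter (fun F => ∀ v ∈ F, v ∈ W)

lemma compVerts_closed_aux [Fintype V] (G : SimpleGraph V) (u : V)
    (c : (SimpleGraph.induce {v : V | v ≠ u} G).ConnectedComponent) (w : V)
    (hu : u ∉ closedNbhd G w) {y : V} (hy : y ∈ closedNbhd G w)
    (hyc : y ∈ compVerts G u c) : ∀ x ∈ closedNbhd G w, x ∈ compVerts G u c := by
  have hw : w ∈ closedNbhd G w := Finset.mem_insert_self _ _
  have hwne : w ≠ u := fun h => hu (h ▸ hw)
  -- first, w ∈ compVerts
  obtain ⟨hyne, hyc⟩ := hyc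
  have hwc : (SimpleGraph.induce {v : V | v ≠ u} G).connectedComponentMk ⟨w, hwne⟩ = c := by
    rcases Finset.mem_insert.mp hy with h | h
    · subst h; exact hyc
    · have hadj : G.Adj w y := (G.mem_neighborFinset w y).mp h
      have : (SimpleGraph.induce {v : V | v ≠ u} G).Adj ⟨w, hwne⟩ ⟨y, hyne⟩ := hadj
      rw [← hyc]
      exact SimpleGraph.ConnectedComponent.eq.mpr this.reachable
  intro x hx
  have hxne : x ≠ u := fun h => hu (h ▸ hx)
  refine ⟨hxne, ?_⟩
  rcases Finset.mem_insert.mp hx with h | h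
  · subst h; exact hwc
  · have hadj : G.Adj x w := ((G.mem_neighborFinset w x).mp h).symm
    have : (SimpleGraph.induce {v : V | v ≠ u} G).Adj ⟨x, hxne⟩ ⟨w, hwne⟩ := hadj
    rw [← hwc]
    exact SimpleGraph.ConnectedComponent.eq.mpr this.reachable

lemma key_lemma [Fintype V] (G : SimpleGraph V) (u : V)
    (ν : ℕ) (hν : ∀ k M, IsNMatching G k M → k ≤ ν)
    (M N : Finset (Finset V)) (hM : IsNMatching G ν M) (hN : IsNMatching G ν N)
    (c : (SimpleGraph.induce {v : V | v ≠ u} G).ConnectedComponent) :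
    (matchPart N (compVerts G u c)).card ≤ (matchPart M (compVerts G u c)).card + 1 := by
  classical
  by_contra h
  push_neg at h
  set W : Set V := compVerts G u c with hW
  have hdisjW : ∀ F ∈ M, (¬ ∀ v ∈ F, v ∈ W) → u ∉ F → ∀ v ∈ F, v ∉ W := by
    intro F hF hnall hu v hv hvW
    obtain ⟨w, hw, -⟩ := hM.2.1 F hF
    subst hw
    exact hnall (compVerts_closed_aux G u c w hu hv hvW)
  set R : Finset (Finset V) :=
    M.filter (fun F => (¬ ∀ v ∈ F, v ∈ W) ∧ u ∉ F) with hR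
  set Nc := matchPart N W with hNc
  have hmemR : ∀ {F}, F ∈ R → F ∈ M ∧ (¬ ∀ v ∈ F, v ∈ W) ∧ u ∉ F := by
    intro F hF; simpa [hR] using hF
  have hmemNc : ∀ {F}, F ∈ Nc → F ∈ N ∧ ∀ v ∈ F, v ∈ W := by
    intro F hF; simpa [hNc, matchPart] using hF
  have hdisjRN : Disjoint R Nc := by
    rw [Finset.disjoint_left]
    intro F hFR hFN
    exact (hmemR hFR).2.1 (hmemNc hFN).2
  have cross : ∀ F ∈ R, ∀ F' ∈ Nc, Disjoint F F' := by
    intro F h1 F' h2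
    rw [Finset.disjoint_left]
    intro a haF haF'
    obtain ⟨hFM, hnall, huF⟩ := hmemR h1
    exact hdisjW F hFM hnall huF a haF ((hmemNc h2).2 a haF')
  have hM' : IsNMatching G (R ∪ Nc).card (R ∪ Nc) := by
    refine ⟨rfl, ?_, ?_⟩
    · intro F hF
      rcases Finset.mem_union.mp hF with h | h
      · exact hM.2.1 F (hmemR h).1
      · exact hN.2.1 F (hmemNc h).1
    · intro F hF F' hF' hne
      rcases Finset.mem_union.mp hF with h1 | h1 <;> rcases Finset.mem_union.mp hF' with h2 | h2
      · exact hM.2.2 F (hmemR h1).1 F' (hmemR h2).1 hne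
      · exact cross F h1 F' h2
      · exact (cross F' h2 F h1).symm
      · exact hN.2.2 F (hmemNc h1).1 F' (hmemNc h2).1 hne
  have hle : (R ∪ Nc).card ≤ ν := hν _ _ hM'
  have hcardU : (R ∪ Nc).card = R.card + Nc.card := Finset.card_union_of_disjoint hdisjRN
  have hsplit : (M.filter (fun F => ∀ v ∈ F, v ∈ W)).card
      + (M.filter (fun F => ¬ ∀ v ∈ F, v ∈ W)).card = M.card :=
    Finset.card_filter_add_card_filter_not _
  have hMc : (matchPart M W).card = (M.filter (fun F => ∀ v ∈ F, v ∈ W)).card := by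
    simp only [matchPart]
    congr 1
    exact Finset.filter_congr_decidable M _ _
  have hsplit2 : (M.filter (fun F => ¬ ∀ v ∈ F, v ∈ W)).card ≤ R.card + 1 := by
    have h1 : M.filter (fun F => ¬ ∀ v ∈ F, v ∈ W) ⊆
        R ∪ M.filter (fun F => u ∈ F) := by
      intro F hF
      rw [Finset.mem_filter] at hF
      obtain ⟨hFM, hnall⟩ := hF
      by_cases hu : u ∈ F
      · exact Finset.mem_union_right _ (Finset.mem_filter.mpr ⟨hFM, hu⟩)
      · exact Finset.mem_union_left _ (Finset.mem_filter.mpr ⟨hFM, hnall, hu⟩)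
    have h2 : (M.filter (fun F => u ∈ F)).card ≤ 1 := by
      apply Finset.card_le_one.mpr
      intro F hF F' hF'
      by_contra hne
      have := hM.2.2 F (Finset.mem_filter.mp hF).1 F' (Finset.mem_filter.mp hF').1 hne
      exact (Finset.disjoint_left.mp this (Finset.mem_filter.mp hF).2)
        (Finset.mem_filter.mp hF').2
    calc (M.filter (fun F => ¬ ∀ v ∈ F, v ∈ W)).card
        ≤ (R ∪ M.filter (fun F => u ∈ F)).card := Finset.card_le_card h1
      _ ≤ R.card + (M.filter (fun F => u ∈ F)).card := Finset.card_union_le _ _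
      _ ≤ R.card + 1 := by omega
  have hMcard : M.card = ν := hM.1
  omega

/-- Lemma 3.7: if `M` and `N` are two `ν`-matchings of `𝒩(T)` for a tree `T` and `u` is a
vertex of `T`, then for every connected component `T_i` of `T \ {u}` one has
`|M_{T_i}| − 1 ≤ |N_{T_i}| ≤ |M_{T_i}| + 1`. -/
theorem card_matchPart_le_of_max_matchings
    [Fintype V] (G : SimpleGraph V) (hT : G.IsTree) (u : V)
    (ν : ℕ) (hν : ∀ k M, IsNMatching G k M → k ≤ ν)
    (M N : Finset (Finset V)) (hM : IsNMatching G ν M) (hN : IsNMatching G ν N) :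
    ∀ c : (SimpleGraph.induce {v : V | v ≠ u} G).ConnectedComponent,
      (matchPart N (compVerts G u c)).card ≤ (matchPart M (compVerts G u c)).card + 1 ∧
      (matchPart M (compVerts G u c)).card ≤ (matchPart N (compVerts G u c)).card + 1 := by
  intro c
  exact ⟨key_lemma G u ν hν M N hM hN c, key_lemma G u ν hν N M hN hM c⟩
end

section
/- Let T be a tree, let u be a vertex of T, and let T_1, …, T_d be the connected components of the induced subgraph of T on V(T) \ {u}. Let ν be the matching number of 𝒩(T), let M and N be two ν-matchings of 𝒩(T), and suppose N_T[u] ∈ M. If N_T[u] ∉ N and u ∈ V_N, then either |M_{T_i}| = |N_{T_i}| for all i, or there exist distinct indices i and j such that |N_{T_i}| = |M_{T_i}| + 1, |N_{T_j}| = |M_{T_j}| − 1, and |N_{T_k}| = |M_{T_k}| for all k ∉ {i, j}. Here M_{T_i} = {F ∈ M : F ⊆ V(T_i)} and similarly for N. -/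
open scoped Classical
open SimpleGraph Finset MvPolynomial

variable {V : Type*}

lemma aux_mem_closedNbhd [Fintype V] (G : SimpleGraph V) {v w : V} :
    v ∈ closedNbhd G w ↔ v = w ∨ G.Adj w v := by
  simp [closedNbhd]

lemma aux_self_mem_closedNbhd [Fintype V] (G : SimpleGraph V) (w : V) :
    w ∈ closedNbhd G w := Finset.mem_insert_self _ _

lemma aux_compVerts_ne [Fintype V] (G : SimpleGraph V) (u : V)
    {v : V} {c : (SimpleGraph.induce {v : V | v ≠ u} G).ConnectedComponent}
    (h : v ∈ compVerts G u c) : v ≠ u := by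
  obtain ⟨h1, -⟩ := h; exact h1

lemma aux_compVerts_inj [Fintype V] (G : SimpleGraph V) (u : V)
    {v : V} {c c' : (SimpleGraph.induce {v : V | v ≠ u} G).ConnectedComponent}
    (h : v ∈ compVerts G u c) (h' : v ∈ compVerts G u c') : c = c' := by
  obtain ⟨h1, h2⟩ := h; obtain ⟨h1', h2'⟩ := h'
  rw [← h2, ← h2']

lemma aux_facet_struct [Fintype V] (G : SimpleGraph V) (u : V) {F : Finset V}
    (hF : IsNFacet G F) (hne : F ≠ closedNbhd G u) :
    ∃ c, ∀ v ∈ F, v = u ∨ v ∈ compVerts G u c := by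
  obtain ⟨w, rfl, -⟩ := hF
  have hw : w ≠ u := by rintro rfl; exact hne rfl
  refine ⟨(SimpleGraph.induce {v : V | v ≠ u} G).connectedComponentMk ⟨w, hw⟩, ?_⟩
  intro v hv
  by_cases hvu : v = u
  · exact Or.inl hvu
  · refine Or.inr ⟨hvu, ?_⟩
    apply SimpleGraph.ConnectedComponent.sound
    rcases (aux_mem_closedNbhd G).mp hv with rfl | hadj
    · exact Reachable.refl _
    · exact (SimpleGraph.Adj.reachable (by simp [SimpleGraph.comap_adj, hadj.symm] :
        (SimpleGraph.induce {v : V | v ≠ u} G).Adj ⟨v, hvu⟩ ⟨w, hw⟩))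

lemma aux_disj [Fintype V] (G : SimpleGraph V) (u : V) {F F' : Finset V}
    {c c' : (SimpleGraph.induce {v : V | v ≠ u} G).ConnectedComponent} (hcc : c ≠ c')
    (h1 : ∀ v ∈ F, v = u ∨ v ∈ compVerts G u c)
    (h2 : ∀ v ∈ F', v ∈ compVerts G u c') : Disjoint F F' := by
  rw [Finset.disjoint_left]
  intro v hv hv'
  have h2' := h2 v hv'
  rcases h1 v hv with hvu | h1'
  · exact aux_compVerts_ne G u h2' hvu
  · exact hcc (aux_compVerts_inj G u h1' h2')

lemma aux_mem_matchPart {M : Finset (Finset V)} {W : Set V} {F : Finset V} :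
    F ∈ matchPart M W ↔ F ∈ M ∧ ∀ v ∈ F, v ∈ W := Finset.mem_filter

lemma aux_sum [Fintype V] (G : SimpleGraph V) (u : V)
    (P : Finset (Finset V)) (K0 : Finset V) (hK0 : u ∈ K0)
    (hstruct : ∀ F ∈ P, F ≠ K0 → ∃ c, ∀ v ∈ F, v ∈ compVerts G u c)
    (hne : ∀ F ∈ P, F.Nonempty) :
    ∑ c, (matchPart P (compVerts G u c)).card = (P.erase K0).card := by
  classical
  have hdisj : ∀ c ∈ Finset.univ, ∀ c' ∈ Finset.univ, c ≠ c' →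
      Disjoint (matchPart P (compVerts G u c)) (matchPart P (compVerts G u c')) := by
    intro c _ c' _ hcc
    rw [Finset.disjoint_left]
    intro F hF hF'
    obtain ⟨hFP, h1⟩ := aux_mem_matchPart.mp hF
    obtain ⟨-, h2⟩ := aux_mem_matchPart.mp hF'
    obtain ⟨v, hv⟩ := hne F hFP
    exact hcc (aux_compVerts_inj G u (h1 v hv) (h2 v hv))
  rw [← Finset.card_biUnion hdisj]
  congr 1
  ext F
  simp only [Finset.mem_biUnion, Finset.mem_univ, true_and, aux_mem_matchPart,
    Finset.mem_erase]
  constructor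
  · rintro ⟨c, hFP, hc⟩
    refine ⟨?_, hFP⟩
    rintro rfl
    exact aux_compVerts_ne G u (hc u hK0) rfl
  · rintro ⟨hFK, hFP⟩
    obtain ⟨c, hc⟩ := hstruct F hFP hFK
    exact ⟨c, hFP, hc⟩

lemma aux_swap [Fintype V] (G : SimpleGraph V) {ν : ℕ}
    (hν : ∀ k M, IsNMatching G k M → k ≤ ν)
    (P R A : Finset (Finset V)) (hP : IsNMatching G ν P) (hR : R ⊆ P)
    (hAfacet : ∀ F ∈ A, IsNFacet G F)
    (hAdisj : ∀ F ∈ A, ∀ F' ∈ A, F ≠ F' → Disjoint F F')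
    (hcross : ∀ F ∈ P, F ∉ R → ∀ F' ∈ A, Disjoint F F')
    (hsep : ∀ F ∈ A, F ∈ P → F ∈ R) :
    (P.card - R.card) + A.card ≤ ν := by
  classical
  set P' := (P \ R) ∪ A with hP'
  have hdisjPA : Disjoint (P \ R) A := by
    rw [Finset.disjoint_left]
    intro F hF hFA
    obtain ⟨hFP, hFR⟩ := Finset.mem_sdiff.mp hF
    exact hFR (hsep F hFA hFP)
  have hcard : P'.card = (P.card - R.card) + A.card := by
    rw [hP', Finset.card_union_of_disjoint hdisjPA, Finset.card_sdiff_of_subset hR]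
  have hmatch : IsNMatching G P'.card P' := by
    refine ⟨rfl, ?_, ?_⟩
    · intro F hF
      rcases Finset.mem_union.mp hF with h | h
      · exact hP.2.1 F (Finset.mem_sdiff.mp h).1
      · exact hAfacet F h
    · intro F hF F' hF' hne
      rcases Finset.mem_union.mp hF with h | h <;> rcases Finset.mem_union.mp hF' with h' | h'
      · exact hP.2.2 F (Finset.mem_sdiff.mp h).1 F' (Finset.mem_sdiff.mp h').1 hne
      · exact hcross F (Finset.mem_sdiff.mp h).1 (Finset.mem_sdiff.mp h).2 F' h'
      · exact (hcross F' (Finset.mem_sdiff.mp h').1 (Finset.mem_sdiff.mp h').2 F h).symm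
      · exact hAdisj F h F' h' hne
  have := hν P'.card P' hmatch
  omega

lemma aux_combin {ι : Type*} [Fintype ι] (m n : ι → ℕ) (c0 : ι) (ν : ℕ)
    (hsumM : ∑ c, m c = ν - 1) (hsumN : ∑ c, n c = ν - 1) (hν1 : 1 ≤ ν)
    (hge : ∀ c, c ≠ c0 → m c ≤ n c) (h4 : m c0 ≤ n c0 + 1) (h5 : n c0 ≤ m c0) :
    (∀ c, m c = n c) ∨ ∃ c c', c ≠ c' ∧ n c = m c + 1 ∧ m c' = n c' + 1 ∧
      ∀ c'', c'' ≠ c → c'' ≠ c' → n c'' = m c'' := by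
  classical
  have he0 := Finset.add_sum_erase Finset.univ m (Finset.mem_univ c0)
  have he0' := Finset.add_sum_erase Finset.univ n (Finset.mem_univ c0)
  by_cases h : m c0 = n c0
  · left
    have hsum' : ∑ c ∈ Finset.univ.erase c0, m c = ∑ c ∈ Finset.univ.erase c0, n c := by
      omega
    have heq := (Finset.sum_eq_sum_iff_of_le
      (fun c hc => hge c (Finset.ne_of_mem_erase hc))).mp hsum'
    intro c
    by_cases hc : c = c0
    · exact hc ▸ h
    · exact heq c (Finset.mem_erase.mpr ⟨hc, Finset.mem_univ c⟩)
  · right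
    have hm0 : m c0 = n c0 + 1 := by omega
    have hlt : ∑ c ∈ Finset.univ.erase c0, m c < ∑ c ∈ Finset.univ.erase c0, n c := by
      omega
    obtain ⟨c1, hc1mem, hc1lt⟩ := Finset.exists_lt_of_sum_lt hlt
    have hc1ne : c1 ≠ c0 := Finset.ne_of_mem_erase hc1mem
    have he1 := Finset.add_sum_erase (Finset.univ.erase c0) m hc1mem
    have he1' := Finset.add_sum_erase (Finset.univ.erase c0) n hc1mem
    have hrest_le : ∑ c ∈ (Finset.univ.erase c0).erase c1, m c
        ≤ ∑ c ∈ (Finset.univ.erase c0).erase c1, n c :=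
      Finset.sum_le_sum (fun c hc =>
        hge c (Finset.ne_of_mem_erase (Finset.mem_of_mem_erase hc)))
    have hrest_eq : ∑ c ∈ (Finset.univ.erase c0).erase c1, m c
        = ∑ c ∈ (Finset.univ.erase c0).erase c1, n c := by omega
    have heq := (Finset.sum_eq_sum_iff_of_le
      (fun c hc => hge c (Finset.ne_of_mem_erase (Finset.mem_of_mem_erase hc)))).mp hrest_eq
    refine ⟨c1, c0, hc1ne, by omega, hm0, ?_⟩
    intro c'' hne1 hne0
    exact (heq c'' (Finset.mem_erase.mpr ⟨hne1,
      Finset.mem_erase.mpr ⟨hne0, Finset.mem_univ c''⟩⟩)).symm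
/-- Lemma 3.8(ii): let `M`, `N` be `ν`-matchings of `𝒩(T)` with `N_T[u] ∈ M`.  If
`N_T[u] ∉ N` and `u ∈ V_N`, then either `|M_{T_i}| = |N_{T_i}|` for every connected
component `T_i` of `T \ {u}`, or there are two distinct components `T_i`, `T_j` with
`|N_{T_i}| = |M_{T_i}| + 1`, `|N_{T_j}| = |M_{T_j}| − 1`, and `|N_{T_k}| = |M_{T_k}|`
for all other components `T_k`. -/
theorem card_matchPart_cases_of_mem_vertexSet
    [Fintype V] (G : SimpleGraph V) (hT : G.IsTree) (u : V)
    (ν : ℕ) (hν : ∀ k M, IsNMatching G k M → k ≤ ν)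
    (M N : Finset (Finset V)) (hM : IsNMatching G ν M) (hN : IsNMatching G ν N)
    (huM : closedNbhd G u ∈ M) (huN : closedNbhd G u ∉ N) (hu : ∃ F ∈ N, u ∈ F) :
    (∀ c : (SimpleGraph.induce {v : V | v ≠ u} G).ConnectedComponent,
      (matchPart M (compVerts G u c)).card = (matchPart N (compVerts G u c)).card) ∨
    (∃ c c' : (SimpleGraph.induce {v : V | v ≠ u} G).ConnectedComponent, c ≠ c' ∧
      (matchPart N (compVerts G u c)).card = (matchPart M (compVerts G u c)).card + 1 ∧
      (matchPart M (compVerts G u c')).card = (matchPart N (compVerts G u c')).card + 1 ∧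
      ∀ c'' : (SimpleGraph.induce {v : V | v ≠ u} G).ConnectedComponent,
        c'' ≠ c → c'' ≠ c' →
        (matchPart N (compVerts G u c'')).card = (matchPart M (compVerts G u c'')).card) := by

  classical
  set K := closedNbhd G u with hK
  have hKu : u ∈ K := aux_self_mem_closedNbhd G u
  obtain ⟨F0, hF0N, huF0⟩ := hu
  have hF0K : F0 ≠ K := by rintro rfl; exact huN hF0N
  have hfacet_ne : ∀ F : Finset V, IsNFacet G F → F.Nonempty := by
    rintro F ⟨w, rfl, -⟩; exact ⟨w, aux_self_mem_closedNbhd G w⟩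
  have hstructM : ∀ F ∈ M, F ≠ K → ∃ c, ∀ v ∈ F, v ∈ compVerts G u c := by
    intro F hF hFK
    have huF : u ∉ F := by
      intro huF
      exact Finset.disjoint_left.mp (hM.2.2 F hF K huM hFK) huF hKu
    obtain ⟨c, hc⟩ := aux_facet_struct G u (hM.2.1 F hF) hFK
    exact ⟨c, fun v hv => (hc v hv).resolve_left (fun h => huF (h ▸ hv))⟩
  have hstructN : ∀ F ∈ N, F ≠ F0 → ∃ c, ∀ v ∈ F, v ∈ compVerts G u c := by
    intro F hF hFF0
    have huF : u ∉ F := by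
      intro huF
      exact Finset.disjoint_left.mp (hN.2.2 F hF F0 hF0N hFF0) huF huF0
    have hFK : F ≠ K := by rintro rfl; exact huF hKu
    obtain ⟨c, hc⟩ := aux_facet_struct G u (hN.2.1 F hF) hFK
    exact ⟨c, fun v hv => (hc v hv).resolve_left (fun h => huF (h ▸ hv))⟩
  obtain ⟨c0, hc0⟩ := aux_facet_struct G u (hN.2.1 F0 hF0N) hF0K
  have hsub : ∀ c, matchPart M (compVerts G u c) ⊆ M := fun c F hF => (aux_mem_matchPart.mp hF).1
  have hsubN : ∀ c, matchPart N (compVerts G u c) ⊆ N := fun c F hF => (aux_mem_matchPart.mp hF).1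
  have hν1 : 1 ≤ ν := by
    have := Finset.card_le_card (Finset.singleton_subset_iff.mpr huM)
    simpa [hM.1] using this
  have hsumM : ∑ c, (matchPart M (compVerts G u c)).card = ν - 1 := by
    rw [aux_sum G u M K hKu hstructM (fun F hF => hfacet_ne F (hM.2.1 F hF)),
      Finset.card_erase_of_mem huM, hM.1]
  have hsumN : ∑ c, (matchPart N (compVerts G u c)).card = ν - 1 := by
    rw [aux_sum G u N F0 huF0 hstructN (fun F hF => hfacet_ne F (hN.2.1 F hF)),
      Finset.card_erase_of_mem hF0N, hN.1]
  have hF0notPart : ∀ c, F0 ∉ matchPart N (compVerts G u c) := by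
    intro c hmem
    exact aux_compVerts_ne G u ((aux_mem_matchPart.mp hmem).2 u huF0) rfl
  have hKnotPartM : ∀ c, K ∉ matchPart M (compVerts G u c) := by
    intro c hmem
    exact aux_compVerts_ne G u ((aux_mem_matchPart.mp hmem).2 u hKu) rfl
  -- m c ≤ n c for c ≠ c0
  have hge : ∀ c, c ≠ c0 →
      (matchPart M (compVerts G u c)).card ≤ (matchPart N (compVerts G u c)).card := by
    intro c hcc0
    have hswap := aux_swap G hν N (matchPart N (compVerts G u c))
        (matchPart M (compVerts G u c)) hN (hsubN c)
        (fun F hF => hM.2.1 F (hsub c hF))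
        (fun F hF F' hF' hne => hM.2.2 F (hsub c hF) F' (hsub c hF') hne)
        ?_ ?_
    · have h1 : (matchPart N (compVerts G u c)).card ≤ ν :=
        hN.1 ▸ Finset.card_le_card (hsubN c)
      rw [hN.1] at hswap
      omega
    · intro F hFN hFnot F' hF'
      have hF'c := (aux_mem_matchPart.mp hF').2
      by_cases hFF0 : F = F0
      · subst hFF0
        exact aux_disj G u hcc0.symm hc0 hF'c
      · obtain ⟨cF, hcF⟩ := hstructN F hFN hFF0
        have hcFc : cF ≠ c := by
          rintro rfl; exact hFnot (aux_mem_matchPart.mpr ⟨hFN, hcF⟩)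
        exact aux_disj G u hcFc (fun v hv => Or.inr (hcF v hv)) hF'c
    · intro F hFA hFN
      exact aux_mem_matchPart.mpr ⟨hFN, (aux_mem_matchPart.mp hFA).2⟩
  -- m c0 ≤ n c0 + 1
  have h4 : (matchPart M (compVerts G u c0)).card
      ≤ (matchPart N (compVerts G u c0)).card + 1 := by
    have hRsub : insert F0 (matchPart N (compVerts G u c0)) ⊆ N :=
      Finset.insert_subset hF0N (hsubN c0)
    have hswap := aux_swap G hν N (insert F0 (matchPart N (compVerts G u c0)))
        (matchPart M (compVerts G u c0)) hN hRsub
        (fun F hF => hM.2.1 F (hsub c0 hF))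
        (fun F hF F' hF' hne => hM.2.2 F (hsub c0 hF) F' (hsub c0 hF') hne)
        ?_ ?_
    · have hRcard : (insert F0 (matchPart N (compVerts G u c0))).card
          = (matchPart N (compVerts G u c0)).card + 1 :=
        Finset.card_insert_of_notMem (hF0notPart c0)
      have hRle : (matchPart N (compVerts G u c0)).card + 1 ≤ ν := by
        rw [← hRcard, ← hN.1]; exact Finset.card_le_card hRsub
      rw [hN.1, hRcard] at hswap
      omega
    · intro F hFN hFnot F' hF'
      have hF'c := (aux_mem_matchPart.mp hF').2
      have hFF0 : F ≠ F0 := by rintro rfl; exact hFnot (Finset.mem_insert_self _ _)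
      obtain ⟨cF, hcF⟩ := hstructN F hFN hFF0
      have hcFc : cF ≠ c0 := by
        rintro rfl
        exact hFnot (Finset.mem_insert_of_mem (aux_mem_matchPart.mpr ⟨hFN, hcF⟩))
      exact aux_disj G u hcFc (fun v hv => Or.inr (hcF v hv)) hF'c
    · intro F hFA hFN
      exact Finset.mem_insert_of_mem
        (aux_mem_matchPart.mpr ⟨hFN, (aux_mem_matchPart.mp hFA).2⟩)
  -- n c0 ≤ m c0
  have h5 : (matchPart N (compVerts G u c0)).card ≤ (matchPart M (compVerts G u c0)).card := by
    have hRsub : insert K (matchPart M (compVerts G u c0)) ⊆ M :=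
      Finset.insert_subset huM (hsub c0)
    have hAsub : insert F0 (matchPart N (compVerts G u c0)) ⊆ N :=
      Finset.insert_subset hF0N (hsubN c0)
    have hswap := aux_swap G hν M (insert K (matchPart M (compVerts G u c0)))
        (insert F0 (matchPart N (compVerts G u c0))) hM hRsub
        (fun F hF => hN.2.1 F (hAsub hF))
        (fun F hF F' hF' hne => hN.2.2 F (hAsub hF) F' (hAsub hF') hne)
        ?_ ?_
    · have hRcard : (insert K (matchPart M (compVerts G u c0))).card
          = (matchPart M (compVerts G u c0)).card + 1 :=
        Finset.card_insert_of_notMem (hKnotPartM c0)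
      have hAcard : (insert F0 (matchPart N (compVerts G u c0))).card
          = (matchPart N (compVerts G u c0)).card + 1 :=
        Finset.card_insert_of_notMem (hF0notPart c0)
      have hRle : (matchPart M (compVerts G u c0)).card + 1 ≤ ν := by
        rw [← hRcard, ← hM.1]; exact Finset.card_le_card hRsub
      rw [hM.1, hRcard, hAcard] at hswap
      omega
    · intro F hFM hFnot F' hF'
      have hFK : F ≠ K := by rintro rfl; exact hFnot (Finset.mem_insert_self _ _)
      obtain ⟨cF, hcF⟩ := hstructM F hFM hFK
      have hcFc : cF ≠ c0 := by
        rintro rfl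
        exact hFnot (Finset.mem_insert_of_mem (aux_mem_matchPart.mpr ⟨hFM, hcF⟩))
      rcases Finset.mem_insert.mp hF' with rfl | hF'
      · exact (aux_disj G u hcFc.symm hc0 (fun v hv => hcF v hv)).symm
      · exact aux_disj G u hcFc (fun v hv => Or.inr (hcF v hv))
          (aux_mem_matchPart.mp hF').2
    · intro F hFA hFM
      rcases Finset.mem_insert.mp hFA with rfl | hFA'
      · exact absurd huF0
          (fun h => Finset.disjoint_left.mp (hM.2.2 F hFM K huM hF0K) h hKu)
      · exact Finset.mem_insert_of_mem
          (aux_mem_matchPart.mpr ⟨hFM, (aux_mem_matchPart.mp hFA').2⟩)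
  exact aux_combin (fun c => (matchPart M (compVerts G u c)).card)
    (fun c => (matchPart N (compVerts G u c)).card) c0 ν hsumM hsumN hν1 hge h4 h5
end

section
/- Let T be a tree with at least three vertices. Fix any pendant vertex x of T and any linear order ≺ on V(T), and let U be the unique ν-matching of 𝒩(T) maximal with respect to >_lex. Let M and N be ν-matchings of 𝒩(T) with F ∈ M \ U and G ∈ N \ U, and assume (F \ G) ∩ V_N = ∅. Then there exists H ∈ U such that H ∩ F ≠ ∅ and H ∩ G ≠ ∅. -/
/-!
Suppose no member of `U` meets both `F = N[u]` and `G' = N[v]`. By maximality `F` meets some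
member of `N`, and by the hypothesis on `F \ G'` this can only be `G'`. If `u = v`, maximality of
`U` gives a member of `U` meeting `F`. Otherwise `d(u, v) ≤ 2`; let `y` be the neighbour of `v` on
the `u`–`v` path and sort the facets of `N` and `U` by the side of the edge `yv` their centres
lie on. Closed neighbourhoods of centres on opposite sides can only meet if they contain `y`
and `v` respectively; from this one checks that the `v`-side of `N` together with the `y`-side
of `U` is a matching, and so is the `y`-side of `N` together with the `v`-side of `U` and `F`.
Their sizes add up to `2ν + 1`, so one of them exceeds `ν`.
-/

open scoped Classical
open SimpleGraph Finset MvPolynomial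

variable {V : Type*}

/-- The order on facets of `𝒩(T)` induced by a root `x` and a linear order on the
vertices: `N_T[u] > N_T[v]` iff `|N_T[u]| < |N_T[v]|`, or the sizes agree and
`level(u) < level(v)` where `level` is the distance from the root `x`, or both agree and
`u` comes earlier in the linear order. -/
def FacetGT [Fintype V] [LinearOrder V] (G : SimpleGraph V) (x : V)
    (F F' : Finset V) : Prop :=
  ∃ u u' : V, F = closedNbhd G u ∧ F' = closedNbhd G u' ∧
    (F.card < F'.card ∨
     (F.card = F'.card ∧ G.dist x u < G.dist x u') ∨
     (F.card = F'.card ∧ G.dist x u = G.dist x u' ∧ u < u'))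

/-- The lexicographic order on `ν`-matchings: writing each matching as a strictly
decreasing sequence of facets, `M >_lex N` iff at the first position where they differ,
the facet of `M` is larger; equivalently, the largest facet of the symmetric difference
`(M \ N) ∪ (N \ M)` belongs to `M`. -/
def MatchGTlex [Fintype V] [LinearOrder V] (G : SimpleGraph V) (x : V)
    (M N : Finset (Finset V)) : Prop :=
  ∃ F ∈ (M \ N) ∪ (N \ M), F ∈ M ∧
    ∀ F' ∈ (M \ N) ∪ (N \ M), F' ≠ F → FacetGT G x F F'

namespace SimpleGraph

variable {G : SimpleGraph V}

lemma Reachable.exists_adj_dist_add_one {u v : V} (h : G.Reachable u v) (huv : u ≠ v) :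
    ∃ y, G.Adj y v ∧ G.dist u y + 1 = G.dist u v := by
  obtain ⟨q, -, hq⟩ := h.symm.exists_path_of_dist
  have hq_nil : ¬q.Nil := Walk.not_nil_of_ne huv.symm
  have hadj : G.Adj q.snd v := (q.adj_snd hq_nil).symm
  have h_tail : G.dist q.snd u ≤ q.tail.length := dist_le _
  have h_len := q.length_tail_add_one hq_nil
  have h_tri := hadj.reachable.dist_triangle_right u
  rw [dist_eq_one_iff_adj.2 hadj] at h_tri
  rw [dist_comm] at h_tail hq
  exact ⟨q.snd, hadj, by omega⟩

/-- `G.dist z y < G.dist z v` says that `z` lies on the `y`-side of the edge `yv`; in a tree the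
only edge joining the two sides is `yv` itself. -/
lemma IsTree.eq_of_adj_of_dist_lt (hG : G.IsTree) {y v z z' : V} (hyv : G.Adj y v)
    (hzz' : G.Adj z z') (hz : G.dist z y < G.dist z v) (hz' : G.dist z' v < G.dist z' y) :
    z = y ∧ z' = v := by
  have hconn := hG.connected
  have hsz := hG.dist_eq_dist_add_one_of_adj z hyv
  have hsz' := hG.dist_eq_dist_add_one_of_adj z' hyv
  have h1 := hzz'.reachable.dist_triangle_left v
  have h2 := hzz'.symm.reachable.dist_triangle_left y
  rw [dist_eq_one_iff_adj.2 hzz'] at h1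
  rw [dist_eq_one_iff_adj.2 hzz'.symm] at h2
  rcases Nat.eq_zero_or_pos (G.dist z y) with h0 | hpos
  · exact ⟨hconn.dist_eq_zero_iff.1 h0, hconn.dist_eq_zero_iff.1 (by omega)⟩
  exfalso
  -- otherwise `z' → z ⇝ y → v` and a shortest `z' ⇝ v` are distinct paths
  obtain ⟨p, hp, hp_len⟩ := hconn.exists_path_of_dist z y
  have hv : v ∉ p.support := fun hv ↦ by
    have := (dist_le (p.takeUntil v hv)).trans (p.length_takeUntil_le_length hv)
    omega
  have hz'p : z' ∉ p.support := fun hz'p ↦ by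
    have := (dist_le (p.dropUntil z' hz'p)).trans (p.length_dropUntil_le_length hz'p)
    omega
  have hz'v : z' ≠ v := by
    rintro rfl
    simp only [dist_self] at *
    omega
  have hpath : (Walk.cons hzz'.symm (p.concat hyv)).IsPath :=
    (hp.concat hv hyv).cons (by simpa [Walk.support_concat, hz'v] using hz'p)
  obtain ⟨q, hq, hq_len⟩ := hconn.exists_path_of_dist z' v
  have := congrArg (fun r : G.Path z' v ↦ r.1.length)
    (hG.isAcyclic.subsingleton_path z' v |>.elim ⟨_, hpath⟩ ⟨q, hq⟩)
  simp only [Walk.length_cons, Walk.length_concat] at this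
  omega

lemma IsTree.dist_add_one_add_dist_le (hG : G.IsTree) {y v a b : V} (hyv : G.Adj y v)
    (ha : G.dist a y < G.dist a v) (hb : G.dist b v < G.dist b y) :
    G.dist a y + 1 + G.dist v b ≤ G.dist a b := by
  suffices ∀ {a} (W : G.Walk a b), G.dist a y < G.dist a v →
      G.dist a y + 1 + G.dist v b ≤ W.length by
    obtain ⟨W, hW⟩ := hG.connected.exists_walk_length_eq_dist a b
    exact hW ▸ this W ha
  intro a W ha
  induction W with
  | nil => omega
  | @cons a c b hac W ih =>
    rw [Walk.length_cons]
    rcases hG.dist_eq_dist_add_one_of_adj c hyv with hc | hc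
    · obtain ⟨rfl, rfl⟩ := hG.eq_of_adj_of_dist_lt hyv hac ha (by omega)
      have := dist_le W
      rw [dist_self]
      omega
    · have := ih hb (by omega)
      have := hac.reachable.dist_triangle_left y
      rw [dist_eq_one_iff_adj.2 hac] at this
      omega

end SimpleGraph

section

variable [Fintype V] {G : SimpleGraph V}

lemma mem_closedNbhd_iff_edist_le_one {u z : V} : z ∈ closedNbhd G u ↔ G.edist u z ≤ 1 := by
  simp [closedNbhd, edist_le_one_iff_adj_or_eq, eq_comm, or_comm]

lemma not_disjoint_closedNbhd_iff_edist_le_two {a b : V} :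
    ¬Disjoint (closedNbhd G a) (closedNbhd G b) ↔ G.edist a b ≤ 2 := by
  rw [Finset.not_disjoint_iff]
  constructor
  · rintro ⟨z, hza, hzb⟩
    rw [mem_closedNbhd_iff_edist_le_one] at hza hzb
    calc G.edist a b ≤ G.edist a z + G.edist z b := G.edist_triangle
      _ ≤ 1 + 1 := add_le_add hza (edist_comm ▸ hzb)
      _ = 2 := one_add_one_eq_two
  · intro h
    rcases h.lt_or_eq with h | h
    · exact ⟨b, mem_closedNbhd_iff_edist_le_one.2 (Order.le_of_lt_add_one h),
        self_mem_closedNbhd b⟩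
    · obtain ⟨-, -, z, hz⟩ := edist_eq_two_iff.1 h
      rw [mem_commonNeighbors] at hz
      exact ⟨z, by simp [closedNbhd, hz.1], by simp [closedNbhd, hz.2]⟩

lemma SimpleGraph.Connected.mem_closedNbhd_iff (hG : G.Connected) {u z : V} :
    z ∈ closedNbhd G u ↔ G.dist u z ≤ 1 := by
  rw [mem_closedNbhd_iff_edist_le_one, ← (hG u z).coe_dist_eq_edist]
  exact_mod_cast Iff.rfl

lemma SimpleGraph.Connected.not_disjoint_closedNbhd_iff (hG : G.Connected) {a b : V} :
    ¬Disjoint (closedNbhd G a) (closedNbhd G b) ↔ G.dist a b ≤ 2 := by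
  rw [not_disjoint_closedNbhd_iff_edist_le_two, ← (hG a b).coe_dist_eq_edist]
  exact_mod_cast Iff.rfl

lemma SimpleGraph.IsTree.mem_closedNbhd_of_not_disjoint (hG : G.IsTree) {y v a b : V}
    (hyv : G.Adj y v) (ha : G.dist a y < G.dist a v) (hb : G.dist b v < G.dist b y)
    (hab : ¬Disjoint (closedNbhd G a) (closedNbhd G b)) :
    y ∈ closedNbhd G a ∧ v ∈ closedNbhd G b := by
  have hcross := hG.dist_add_one_add_dist_le hyv ha hb
  have hvb : G.dist v b = G.dist b v := dist_comm
  rw [hG.connected.not_disjoint_closedNbhd_iff] at hab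
  rw [hG.connected.mem_closedNbhd_iff, hG.connected.mem_closedNbhd_iff]
  omega

lemma IsNFacet.nonempty {F : Finset V} (hF : IsNFacet G F) : F.Nonempty := by
  obtain ⟨u, rfl, -⟩ := hF
  exact ⟨u, self_mem_closedNbhd u⟩

lemma IsNFacet.center_unique {F : Finset V} (hF : IsNFacet G F) {w w' : V}
    (hw : F = closedNbhd G w) (hw' : F = closedNbhd G w') : w = w' := by
  obtain ⟨u, rfl, hu⟩ := hF
  have key : ∀ w, closedNbhd G u = closedNbhd G w → w = u := fun w hw ↦
    by_contra fun hne ↦ hu w hne hw.ge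
  rw [key w hw, key w' hw']

namespace IsNMatching

variable {k l : ℕ} {A B : Finset (Finset V)}

lemma singleton {F : Finset V} (hF : IsNFacet G F) : IsNMatching G 1 {F} := by
  refine ⟨card_singleton F, by simpa using hF, ?_⟩
  simp +contextual

lemma filter (hA : IsNMatching G k A) (p : Finset V → Prop) [DecidablePred p] :
    IsNMatching G (A.filter p).card (A.filter p) :=
  ⟨rfl, fun F hF ↦ hA.2.1 F (mem_of_mem_filter F hF),
    fun F hF F' hF' ↦ hA.2.2 F (mem_of_mem_filter F hF) F' (mem_of_mem_filter F' hF')⟩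

lemma union (hA : IsNMatching G k A) (hB : IsNMatching G l B)
    (hAB : ∀ P ∈ A, ∀ Q ∈ B, Disjoint P Q) : IsNMatching G (k + l) (A ∪ B) := by
  have hdisj : Disjoint A B := Finset.disjoint_left.2 fun P hPA hPB ↦
    (hA.2.1 P hPA).nonempty.ne_empty (disjoint_self.1 (hAB P hPA P hPB))
  refine ⟨by rw [card_union_of_disjoint hdisj, hA.1, hB.1], ?_, ?_⟩
  · intro F hF
    rcases mem_union.1 hF with hF | hF
    exacts [hA.2.1 F hF, hB.2.1 F hF]
  · intro P hP Q hQ hPQ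
    rcases mem_union.1 hP with hP | hP <;> rcases mem_union.1 hQ with hQ | hQ
    exacts [hA.2.2 P hP Q hQ hPQ, hAB P hP Q hQ, (hAB Q hQ P hP).symm, hB.2.2 P hP Q hQ hPQ]

variable {ν : ℕ}

lemma exists_not_disjoint (hν : ∀ k M, IsNMatching G k M → k ≤ ν) (hA : IsNMatching G ν A)
    {F : Finset V} (hF : IsNFacet G F) :
    ∃ H ∈ A, ¬Disjoint F H := by
  by_contra! h
  have := hν _ _ ((singleton hF).union hA (by simpa using h))
  omega

/-- Swapping the `p`-parts of two maximum matchings gives two families whose sizes add up to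
`2ν`; if both are matchings and `F` can be added to one of them, that one exceeds `ν`. -/
lemma false_of_swap (hν : ∀ k M, IsNMatching G k M → k ≤ ν) {N U : Finset (Finset V)}
    (hN : IsNMatching G ν N) (hU : IsNMatching G ν U) {F : Finset V} (hF : IsNFacet G F)
    (p : Finset V → Prop)
    (hX : ∀ P ∈ N, ∀ Q ∈ U, ¬p P → p Q → Disjoint P Q)
    (hY : ∀ P ∈ N, ∀ Q ∈ U, p P → ¬p Q → Disjoint P Q)
    (hFN : ∀ P ∈ N, p P → Disjoint F P) (hFU : ∀ Q ∈ U, ¬p Q → Disjoint F Q) : False := by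
  have hXle := hν _ _ <| (hN.filter (¬p ·)).union (hU.filter p) <| by
    simp only [mem_filter]
    exact fun P hP Q hQ ↦ hX P hP.1 Q hQ.1 hP.2 hQ.2
  have hYle := hν _ _ <| (singleton hF).union ((hN.filter p).union (hU.filter (¬p ·)) <| by
      simp only [mem_filter]
      exact fun P hP Q hQ ↦ hY P hP.1 Q hQ.1 hP.2 hQ.2) <| by
    simp only [mem_singleton, mem_union, mem_filter, forall_eq]
    rintro Q (⟨hQ, hpQ⟩ | ⟨hQ, hpQ⟩)
    exacts [hFN Q hQ hpQ, hFU Q hQ hpQ]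
  have hNsplit := card_filter_add_card_filter_not (s := N) p
  have hUsplit := card_filter_add_card_filter_not (s := U) p
  rw [hN.1] at hNsplit
  rw [hU.1] at hUsplit
  omega

end IsNMatching

theorem SimpleGraph.IsTree.exists_not_disjoint_closedNbhd_both (hG : G.IsTree) {ν : ℕ}
    (hν : ∀ k M, IsNMatching G k M → k ≤ ν) {N U : Finset (Finset V)}
    (hN : IsNMatching G ν N) (hU : IsNMatching G ν U) {u v : V}
    (hu : IsNFacet G (closedNbhd G u)) (hvN : closedNbhd G v ∈ N) (huv : u ≠ v)
    (hmeet : ¬Disjoint (closedNbhd G u) (closedNbhd G v))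
    (honly : ∀ K ∈ N, K ≠ closedNbhd G v → Disjoint (closedNbhd G u) K) :
    ∃ H ∈ U, ¬Disjoint H (closedNbhd G u) ∧ ¬Disjoint H (closedNbhd G v) := by
  by_contra! hcon
  have hconn := hG.connected
  obtain ⟨y, hyv, huy⟩ := (hconn u v).exists_adj_dist_add_one huv
  have hyu : y ∈ closedNbhd G u := by
    have := hconn.not_disjoint_closedNbhd_iff.1 hmeet
    rw [hconn.mem_closedNbhd_iff]
    omega
  have hu_side : G.dist u y < G.dist u v := by omega
  have hmem := fun {a b} ↦ hG.mem_closedNbhd_of_not_disjoint (a := a) (b := b) hyv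
  let ySide : Finset V → Prop := fun K ↦ ∃ w, K = closedNbhd G w ∧ G.dist w y < G.dist w v
  have vSide {w : V} (hw : ¬ySide (closedNbhd G w)) : G.dist w v < G.dist w y := by
    have := hG.dist_eq_dist_add_one_of_adj w hyv
    have : ¬G.dist w y < G.dist w v := fun h ↦ hw ⟨w, rfl, h⟩
    omega
  have hv_side : ¬ySide (closedNbhd G v) := fun ⟨w, hw, h⟩ ↦ by
    obtain rfl := (hN.2.1 _ hvN).center_unique hw rfl
    simp at h
  refine hN.false_of_swap hν hU hu ySide ?_ ?_ ?_ ?_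
  · rintro P hP Q hQ hPs ⟨w', rfl, hw'⟩
    by_contra hPQ
    obtain ⟨w, rfl, -⟩ := hN.2.1 P hP
    obtain ⟨hyQ, hvP⟩ := hmem hw' (vSide hPs) (disjoint_comm.not.1 hPQ)
    obtain rfl : w = v := (hN.2.1 _ hP).center_unique rfl <| by_contra fun h ↦
      Finset.disjoint_left.1 (hN.2.2 _ hP _ hvN h) hvP (self_mem_closedNbhd v)
    exact hPQ (hcon _ hQ (not_disjoint_iff.2 ⟨y, hyQ, hyu⟩)).symm
  · rintro P hP Q hQ ⟨w, rfl, hw⟩ hQs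
    by_contra hPQ
    obtain ⟨w', rfl, -⟩ := hU.2.1 Q hQ
    obtain ⟨hyP, -⟩ := hmem hw (vSide hQs) hPQ
    obtain rfl : w = v := (hN.2.1 _ hP).center_unique rfl <| by_contra fun h ↦
      Finset.disjoint_left.1 (honly _ hP h) hyu hyP
    exact hv_side ⟨_, rfl, hw⟩
  · exact fun P hP hPs ↦ honly P hP fun h ↦ hv_side (h ▸ hPs)
  · intro Q hQ hQs
    by_contra hFQ
    obtain ⟨w', rfl, -⟩ := hU.2.1 Q hQ
    obtain ⟨-, hvQ⟩ := hmem hu_side (vSide hQs) hFQ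
    exact Finset.disjoint_left.1 (hcon _ hQ (disjoint_comm.not.1 hFQ)) hvQ
      (self_mem_closedNbhd v)

end

theorem exists_facet_meeting_both_general
    [Fintype V] [LinearOrder V] (G : SimpleGraph V) (hT : G.IsTree)
    (ν : ℕ) (hν : ∀ k M, IsNMatching G k M → k ≤ ν)
    (U : Finset (Finset V)) (hU : IsNMatching G ν U)
    (M N : Finset (Finset V)) (hM : IsNMatching G ν M) (hN : IsNMatching G ν N)
    (F G' : Finset V) (hFM : F ∈ M) (hGN : G' ∈ N)
    (hdisj : ∀ v ∈ F, v ∉ G' → ∀ H ∈ N, v ∉ H) :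
    ∃ H ∈ U, (H ∩ F).Nonempty ∧ (H ∩ G').Nonempty := by
  simp only [← not_disjoint_iff_nonempty_inter]
  have hF := hM.2.1 F hFM
  have honly : ∀ K ∈ N, K ≠ G' → Disjoint F K := fun K hK hKG ↦
    Finset.disjoint_left.2 fun t htF htK ↦
    if htG : t ∈ G' then Finset.disjoint_left.1 (hN.2.2 G' hGN K hK hKG.symm) htG htK
    else hdisj t htF htG K hK htK
  obtain ⟨K, hK, hFK⟩ := hN.exists_not_disjoint hν hF
  obtain rfl : K = G' := by_contra fun hKG ↦ hFK (honly K hK hKG)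
  obtain ⟨u, rfl, -⟩ := hM.2.1 F hFM
  obtain ⟨v, rfl, -⟩ := hN.2.1 K hK
  obtain rfl | huv := eq_or_ne u v
  · obtain ⟨H, hH, hHF⟩ := hU.exists_not_disjoint hν hF
    exact ⟨H, hH, disjoint_comm.not.1 hHF, disjoint_comm.not.1 hHF⟩
  · exact hT.exists_not_disjoint_closedNbhd_both hν hN hU hF hK huv hFK honly

/-- Lemma 4.4: let `T` be a tree (with at least three vertices, rooted at a pendant
vertex `x`), `U` the unique `>_lex`-maximal `ν`-matching, and `M`, `N` two `ν`-matchings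
with `F ∈ M \ U` and `G' ∈ N \ U`.  If `(F \ G') ∩ V_N = ∅`, then there is a facet
`H ∈ U` meeting both `F` and `G'`. -/
theorem exists_facet_meeting_both
    [Fintype V] [LinearOrder V] (G : SimpleGraph V) (hT : G.IsTree)
    (h3 : 3 ≤ Fintype.card V) (x : V) (hx : G.degree x = 1)
    (ν : ℕ) (hν : ∀ k M, IsNMatching G k M → k ≤ ν)
    (U : Finset (Finset V)) (hU : IsNMatching G ν U)
    (hUmax : ∀ M, IsNMatching G ν M → M ≠ U → MatchGTlex G x U M)
    (M N : Finset (Finset V)) (hM : IsNMatching G ν M) (hN : IsNMatching G ν N)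
    (F G' : Finset V) (hFM : F ∈ M) (hFU : F ∉ U) (hGN : G' ∈ N) (hGU : G' ∉ U)
    (hdisj : ∀ v ∈ F, v ∉ G' → ∀ H ∈ N, v ∉ H) :
    ∃ H ∈ U, (H ∩ F).Nonempty ∧ (H ∩ G').Nonempty :=
  exists_facet_meeting_both_general G hT ν hν U hU M N hM hN F G' hFM hGN hdisj
end
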